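/- Let p > 1 be real, set γ = (3p+5)/(4(p−1)), and let D₀ > 0. Define g : (−1,1) → ℝ by g(c) = D₀(1−c²)^{γ}. Then for every c ∈ (−1,1): g''(c) < 0 if and only if c² < 2(p−1)/(p+7), and g''(c) > 0 if and only if c² > 2(p−1)/(p+7). In particular, if p ≥ 9 then g''(c) < 0 for all c ∈ (−1,1), and if 1 < p < 9 then g''(c) < 0 for c² < 2(p−1)/(p+7) and g''(c) > 0 for 2(p−1)/(p+7) < c² < 1. -/

import Mathlib

open MeasureTheory Set

private lemma deriv_one_aux (γ D0 : ℝ) (x : ℝ) (hx : x ∈ Ioo (-1:ℝ) 1) :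
    HasDerivAt (fun c' : ℝ => D0 * (1 - c' ^ 2) ^ γ)
      (-2 * D0 * γ * x * (1 - x ^ 2) ^ (γ - 1)) x := by
  obtain ⟨h1, h2⟩ := hx
  have h0 : (0:ℝ) < 1 - x ^ 2 := by nlinarith
  have hbase : HasDerivAt (fun c' : ℝ => 1 - c' ^ 2) (-(2 * x)) x := by
    simpa using (hasDerivAt_pow 2 x).const_sub 1
  have h := (hbase.rpow_const (p := γ) (Or.inl h0.ne')).const_mul D0
  refine h.congr_deriv ?_
  ring

private lemma second_deriv (p : ℝ) (hp : 1 < p) (D0 : ℝ)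
    (c : ℝ) (hc : c ∈ Ioo (-1:ℝ) 1) :
    iteratedDeriv 2 (fun c' : ℝ => D0 * (1 - c' ^ 2) ^ ((3 * p + 5) / (4 * (p - 1)))) c
      = 2 * D0 * ((3 * p + 5) / (4 * (p - 1))) * (1 - c ^ 2) ^ ((3 * p + 5) / (4 * (p - 1)) - 2)
        * ((2 * ((3 * p + 5) / (4 * (p - 1))) - 1) * c ^ 2 - 1) := by
  set γ := (3 * p + 5) / (4 * (p - 1)) with hγ
  obtain ⟨h1, h2⟩ := hc
  have h0 : (0:ℝ) < 1 - c ^ 2 := by nlinarith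
  -- eventual equality of deriv with explicit formula
  have hEE : deriv (fun c' : ℝ => D0 * (1 - c' ^ 2) ^ γ)
      =ᶠ[nhds c] fun x => -2 * D0 * γ * x * (1 - x ^ 2) ^ (γ - 1) := by
    filter_upwards [isOpen_Ioo.mem_nhds ⟨h1, h2⟩] with x hx
    exact (deriv_one_aux γ D0 x hx).deriv
  -- derivative of the explicit formula
  have hbase : HasDerivAt (fun c' : ℝ => 1 - c' ^ 2) (-(2 * c)) c := by
    simpa using (hasDerivAt_pow 2 c).const_sub 1
  have hf1 : HasDerivAt (fun x : ℝ => -2 * D0 * γ * x * (1 - x ^ 2) ^ (γ - 1))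
      (2 * D0 * γ * (1 - c ^ 2) ^ (γ - 2) * ((2 * γ - 1) * c ^ 2 - 1)) c := by
    have hid : HasDerivAt (fun x : ℝ => x) 1 c := hasDerivAt_id c
    have hpow : HasDerivAt (fun x : ℝ => (1 - x ^ 2) ^ (γ - 1))
        (-(2 * c) * (γ - 1) * (1 - c ^ 2) ^ (γ - 1 - 1)) c :=
      hbase.rpow_const (Or.inl h0.ne')
    have h := ((hid.mul hpow).const_mul (-2 * D0 * γ))
    have heq : (fun x : ℝ => -2 * D0 * γ * x * (1 - x ^ 2) ^ (γ - 1))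
        = fun y : ℝ => -2 * D0 * γ * (y * (1 - y ^ 2) ^ (γ - 1)) := by
      funext y; ring
    rw [heq]
    refine h.congr_deriv ?_
    have e1 : γ - 1 - 1 = γ - 2 := by ring
    have e2 : (1 - c ^ 2) ^ (γ - 1) = (1 - c ^ 2) ^ (γ - 2) * (1 - c ^ 2) := by
      rw [show γ - 1 = (γ - 2) + 1 by ring, Real.rpow_add h0, Real.rpow_one]
    rw [e1, e2]
    ring
  rw [iteratedDeriv_succ, iteratedDeriv_one, hEE.deriv_eq, hf1.deriv]

/-- Sign of the second derivative of `g(c) = D₀(1−c²)^γ`, `γ = (3p+5)/(4(p−1))`: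
`g'' < 0` iff `c² < 2(p−1)/(p+7)` and `g'' > 0` iff `c² > 2(p−1)/(p+7)`. -/
theorem convexity_of_d_beta_zero (p : ℝ) (hp : 1 < p) (D0 : ℝ) (hD0 : 0 < D0) :
    (∀ c ∈ Ioo (-1 : ℝ) 1,
      (iteratedDeriv 2
          (fun c' : ℝ => D0 * (1 - c' ^ 2) ^ ((3 * p + 5) / (4 * (p - 1)))) c < 0
        ↔ c ^ 2 < 2 * (p - 1) / (p + 7)) ∧
      (0 < iteratedDeriv 2
          (fun c' : ℝ => D0 * (1 - c' ^ 2) ^ ((3 * p + 5) / (4 * (p - 1)))) c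
        ↔ 2 * (p - 1) / (p + 7) < c ^ 2)) ∧
    (9 ≤ p → ∀ c ∈ Ioo (-1 : ℝ) 1,
      iteratedDeriv 2
        (fun c' : ℝ => D0 * (1 - c' ^ 2) ^ ((3 * p + 5) / (4 * (p - 1)))) c < 0) ∧
    (p < 9 → ∀ c ∈ Ioo (-1 : ℝ) 1,
      (c ^ 2 < 2 * (p - 1) / (p + 7) →
        iteratedDeriv 2
          (fun c' : ℝ => D0 * (1 - c' ^ 2) ^ ((3 * p + 5) / (4 * (p - 1)))) c < 0) ∧
      (2 * (p - 1) / (p + 7) < c ^ 2 →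
        0 < iteratedDeriv 2
          (fun c' : ℝ => D0 * (1 - c' ^ 2) ^ ((3 * p + 5) / (4 * (p - 1)))) c)) := by
  have hp1 : (0:ℝ) < p - 1 := by linarith
  have hp7 : (0:ℝ) < p + 7 := by linarith
  have hγpos : 0 < (3 * p + 5) / (4 * (p - 1)) := by positivity
  have main : ∀ c ∈ Ioo (-1 : ℝ) 1,
      (iteratedDeriv 2
          (fun c' : ℝ => D0 * (1 - c' ^ 2) ^ ((3 * p + 5) / (4 * (p - 1)))) c < 0
        ↔ c ^ 2 < 2 * (p - 1) / (p + 7)) ∧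
      (0 < iteratedDeriv 2
          (fun c' : ℝ => D0 * (1 - c' ^ 2) ^ ((3 * p + 5) / (4 * (p - 1)))) c
        ↔ 2 * (p - 1) / (p + 7) < c ^ 2) := by
    intro c hc
    obtain ⟨h1, h2⟩ := hc
    have h0 : (0:ℝ) < 1 - c ^ 2 := by nlinarith
    rw [second_deriv p hp D0 c ⟨h1, h2⟩]
    set γ := (3 * p + 5) / (4 * (p - 1)) with hγ
    set A := 2 * D0 * γ * (1 - c ^ 2) ^ (γ - 2) with hA
    have hApos : 0 < A := by
      have := Real.rpow_pos_of_pos h0 (γ - 2)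
      positivity
    have hcoef : 2 * γ - 1 = (p + 7) / (2 * (p - 1)) := by
      rw [hγ]; field_simp; ring
    have hsign : ((2 * γ - 1) * c ^ 2 - 1 < 0 ↔ c ^ 2 < 2 * (p - 1) / (p + 7)) ∧
        (0 < (2 * γ - 1) * c ^ 2 - 1 ↔ 2 * (p - 1) / (p + 7) < c ^ 2) := by
      rw [hcoef]
      constructor
      · rw [sub_neg, div_mul_eq_mul_div, div_lt_one (by linarith : (0:ℝ) < 2 * (p - 1)),
          lt_div_iff₀ hp7]
        constructor <;> intro h <;> nlinarith
      · rw [sub_pos, div_mul_eq_mul_div, one_lt_div (by linarith : (0:ℝ) < 2 * (p - 1)),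
          div_lt_iff₀ hp7]
        constructor <;> intro h <;> nlinarith
    constructor
    · rw [← hsign.1]
      constructor <;> intro h <;> nlinarith
    · rw [← hsign.2]
      constructor <;> intro h <;> nlinarith
  refine ⟨main, ?_, ?_⟩
  · intro hp9 c hc
    obtain ⟨h1, h2⟩ := hc
    have hT : 1 ≤ 2 * (p - 1) / (p + 7) := by
      rw [le_div_iff₀ hp7]; linarith
    exact (main c ⟨h1, h2⟩).1.mpr (by nlinarith)
  · intro _ c hc
    exact ⟨fun h => (main c hc).1.mpr h, fun h => (main c hc).2.mpr h⟩
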